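/- (Upper bound (12).) Let n ≥ 1 and let x be a schedule. Then the worst-case regret satisfies Z(x) ≤ max over jobs j ∉ H(x) of ( C_max(x, r̄^j) − ( r⁺ j + min over machines i of p i j ) ), the maximum being over the nonempty set of jobs not in H(x). -/

import Mathlib

open Finset

/-- A schedule assigns to each machine a finite sequence of jobs such that
every job occurs exactly once among all the sequences. -/
structure Schedule (m n : ℕ) where
  seq : Fin m → List (Fin n)
  valid : ∀ j : Fin n, (∑ i : Fin m, (seq i).count j) = 1

variable {m n : ℕ}

/-- Completion time after processing the list `L` of jobs on a machine with
processing times `q` and release dates `r`; recursively `C₀ = 0`,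
`C_k = q j_k + max C_{k-1} (r j_k)`. -/
def mComp (q r : Fin n → ℝ) (L : List (Fin n)) : ℝ :=
  L.foldl (fun c j => q j + max c (r j)) 0

/-- Makespan of the schedule `x` under the release dates `r`. -/
noncomputable def Cmax (p : Fin m → Fin n → ℝ) (x : Schedule m n) (r : Fin n → ℝ) : ℝ :=
  ⨆ i : Fin m, mComp (p i) r (x.seq i)

/-- Optimal makespan `C*(r)`: the minimum of `Cmax` over all schedules. -/
noncomputable def Cstar (p : Fin m → Fin n → ℝ) (r : Fin n → ℝ) : ℝ :=
  ⨅ x : Schedule m n, Cmax p x r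

/-- Regret of schedule `x` under scenario `r`. -/
noncomputable def regret (p : Fin m → Fin n → ℝ) (x : Schedule m n) (r : Fin n → ℝ) : ℝ :=
  Cmax p x r - Cstar p r

/-- The scenario box determined by the interval bounds. -/
def box (rlo rhi : Fin n → ℝ) : Set (Fin n → ℝ) :=
  {r | ∀ j, rlo j ≤ r j ∧ r j ≤ rhi j}

/-- Worst-case regret `Z(x)`. -/
noncomputable def Zreg (p : Fin m → Fin n → ℝ) (x : Schedule m n) (rlo rhi : Fin n → ℝ) : ℝ :=
  sSup ((fun r => regret p x r) '' box rlo rhi)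

/-- Extreme scenario `r̄^j`. -/
def extSc (rlo rhi : Fin n → ℝ) (j : Fin n) : Fin n → ℝ :=
  Function.update rlo j (rhi j)

/-- The set `H(x)` of jobs whose release interval is covered by the
processing of their predecessors (positions are 0-indexed: job at position
`k ≥ 1` has predecessors `(x.seq i).take k`). -/
def Hset (p : Fin m → Fin n → ℝ) (rlo rhi : Fin n → ℝ) (x : Schedule m n) : Set (Fin n) :=
  {j | ∃ i : Fin m, ∃ k : ℕ, 1 ≤ k ∧ (x.seq i)[k]? = some j ∧
    rhi j ≤ mComp (p i) rlo ((x.seq i).take k)}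

/-- Lower bound `LB₁(r) = max_j (r j + min_i p i j)`. -/
noncomputable def LB1 (p : Fin m → Fin n → ℝ) (r : Fin n → ℝ) : ℝ :=
  ⨆ j : Fin n, (r j + ⨅ i : Fin m, p i j)

/-- Lower bound `LB(r) = min_j r j + m⁻¹ ∑_j min_i p i j`. -/
noncomputable def LB0 (p : Fin m → Fin n → ℝ) (r : Fin n → ℝ) : ℝ :=
  (⨅ j : Fin n, r j) + (m : ℝ)⁻¹ * ∑ j : Fin n, ⨅ i : Fin m, p i j

/-- `E_j(r)`: the jobs unavailable before `j`. -/
noncomputable def Ej (r : Fin n → ℝ) (j : Fin n) : Finset (Fin n) :=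
  Finset.univ.filter fun t => r j ≤ r t

lemma Ej_nonempty (r : Fin n → ℝ) (j : Fin n) : (Ej r j).Nonempty :=
  ⟨j, by simp [Ej]⟩

/-- `W_j(E_j(r), p)` from the paper. -/
noncomputable def W2 (p : Fin m → Fin n → ℝ) (r : Fin n → ℝ) (j : Fin n) : ℝ :=
  (Ej r j).inf' (Ej_nonempty r j) r + (m : ℝ)⁻¹ * ∑ t ∈ Ej r j, ⨅ i : Fin m, p i t

/-- Lower bound `LB₂(r)`. -/
noncomputable def LB2 (p : Fin m → Fin n → ℝ) (r : Fin n → ℝ) : ℝ :=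
  ⨆ j : Fin n, W2 p r j

/-- `W̃_j(E_j(r), p_w)` from the paper, with `λ_j = ⌈|E_j(r)|/m⌉`. -/
noncomputable def W3 (p : Fin m → Fin n → ℝ) (r : Fin n → ℝ) (j : Fin n) : ℝ :=
  (Ej r j).inf' (Ej_nonempty r j) r +
    (⌈((Ej r j).card : ℝ) / (m : ℝ)⌉ : ℝ) *
      (Ej r j).inf' (Ej_nonempty r j) (fun t => ⨅ i : Fin m, p i t)

/-- Lower bound `LB₃(r)`. -/
noncomputable def LB3 (p : Fin m → Fin n → ℝ) (r : Fin n → ℝ) : ℝ :=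
  ⨆ j : Fin n, W3 p r j

/-- The combined lower bound `LB(r̄) = max {LB₁, LB₂, LB₃}`. -/
noncomputable def LBall (p : Fin m → Fin n → ℝ) (r : Fin n → ℝ) : ℝ :=
  max (LB1 p r) (max (LB2 p r) (LB3 p r))

/-!
Fix a scenario `r` in the box and a machine `i`. Scanning the jobs of `i` backwards, stop at the
first job `j` that starts exactly at its release date under `r` and whose predecessors finish
before `r⁺ j` under `r⁻` (the first job of `i` qualifies). Then `j ∉ H(x)`, and after `j` the
machine is never idle, so `C_i(x, r) = r j + p i j + Σ_{t after j} p i t`. Under `r̄^j` the job `j`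
cannot start before `r⁺ j`, so `C_max(x, r̄^j) ≥ r⁺ j + p i j + Σ_{t after j} p i t`, while
`C*(r) ≥ r j + min_i p i j`. Subtracting bounds `C_i(x, r) - C*(r)` by the term of `j`.
-/

lemma mComp_nil (q r : Fin n → ℝ) : mComp q r [] = 0 := rfl

lemma mComp_append_singleton (q r : Fin n → ℝ) (L : List (Fin n)) (j : Fin n) :
    mComp q r (L ++ [j]) = q j + max (mComp q r L) (r j) := by
  simp [mComp, List.foldl_append]

lemma mComp_mono {q r r' : Fin n → ℝ} (h : ∀ j, r j ≤ r' j) (L : List (Fin n)) :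
    mComp q r L ≤ mComp q r' L := by
  induction L using List.reverseRecOn with
  | nil => rfl
  | append_singleton L j ih =>
    rw [mComp_append_singleton, mComp_append_singleton]
    gcongr
    exact h j

lemma add_sum_le_foldl (q r : Fin n → ℝ) (L : List (Fin n)) (c : ℝ) :
    c + (L.map q).sum ≤ L.foldl (fun c j => q j + max c (r j)) c := by
  induction L generalizing c with
  | nil => simp
  | cons j L ih =>
    simp only [List.foldl_cons, List.map_cons, List.sum_cons]
    linarith [ih (q j + max c (r j)), le_max_left c (r j)]

lemma add_sum_le_mComp_append_cons (q r : Fin n → ℝ) (A B : List (Fin n)) (j : Fin n) :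
    r j + q j + (B.map q).sum ≤ mComp q r (A ++ j :: B) := by
  rw [mComp, List.foldl_append, List.foldl_cons]
  refine le_trans ?_ (add_sum_le_foldl q r B _)
  rw [add_comm (r j)]
  gcongr
  exact le_max_right _ _

theorem exists_critical_job {q rlo rhi r : Fin n → ℝ} (hlo : ∀ j, 0 ≤ rlo j)
    (hlt : ∀ j, rlo j < rhi j) (hr : r ∈ box rlo rhi) {L : List (Fin n)} (hL : L ≠ []) :
    ∃ A j B, L = A ++ j :: B ∧ mComp q rlo A < rhi j ∧
      mComp q r L = r j + q j + (B.map q).sum := by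
  induction L using List.reverseRecOn with
  | nil => exact absurd rfl hL
  | append_singleton L j ih =>
    by_cases hcrit : mComp q rlo L < rhi j ∧ mComp q r L ≤ r j
    · refine ⟨L, j, [], by simp, hcrit.1, ?_⟩
      rw [mComp_append_singleton, max_eq_right hcrit.2]
      simp [add_comm]
    · have hbusy : r j ≤ mComp q r L := by
        by_contra! h
        exact hcrit ⟨((mComp_mono (fun t => (hr t).1) L).trans_lt h).trans_le (hr j).2, h.le⟩
      have hL' : L ≠ [] := by
        rintro rfl
        exact hcrit ⟨(hlo j).trans_lt (hlt j), (hlo j).trans (hr j).1⟩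
      obtain ⟨A, j', B, rfl, hA, hB⟩ := ih hL'
      refine ⟨A, j', B ++ [j], by simp, hA, ?_⟩
      rw [mComp_append_singleton, max_eq_left hbusy, hB]
      simp only [List.map_append, List.map_cons, List.map_nil, List.sum_append, List.sum_cons,
        List.sum_nil]
      ring

namespace Schedule

variable (x : Schedule m n)

lemma exists_mem (t : Fin n) : ∃ i, t ∈ x.seq i := by
  by_contra! h
  simpa [List.count_eq_zero_of_not_mem (h _)] using x.valid t

lemma count_le_one (i : Fin m) (t : Fin n) : (x.seq i).count t ≤ 1 :=
  x.valid t ▸ Finset.single_le_sum (f := fun i => (x.seq i).count t)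
    (fun _ _ => Nat.zero_le _) (Finset.mem_univ i)

lemma nodup (i : Fin m) : (x.seq i).Nodup :=
  List.nodup_iff_count_le_one.2 (x.count_le_one i)

lemma eq_of_mem {i i' : Fin m} {t : Fin n} (h : t ∈ x.seq i) (h' : t ∈ x.seq i') : i = i' := by
  by_contra hne
  have hsum := Finset.sum_le_sum_of_subset (f := fun i => (x.seq i).count t)
    (Finset.subset_univ {i, i'})
  rw [Finset.sum_pair hne, x.valid t] at hsum
  have := List.count_pos_iff.2 h
  have := List.count_pos_iff.2 h'
  omega

end Schedule

section Bound

variable {p : Fin m → Fin n → ℝ} {rlo rhi : Fin n → ℝ} {x : Schedule m n}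

lemma notMem_Hset_of_getElem? {i : Fin m} {k : ℕ} {j : Fin n} (hj : (x.seq i)[k]? = some j)
    (hfree : mComp (p i) rlo ((x.seq i).take k) < rhi j) : j ∉ Hset p rlo rhi x := by
  rintro ⟨i', k', -, hj', hle⟩
  obtain rfl : i' = i := x.eq_of_mem (List.mem_of_getElem? hj') (List.mem_of_getElem? hj)
  obtain rfl : k' = k := by
    obtain ⟨hk, hkj⟩ := List.getElem?_eq_some_iff.1 hj
    obtain ⟨hk', hkj'⟩ := List.getElem?_eq_some_iff.1 hj'
    exact ((x.nodup i').getElem_inj_iff).1 (hkj'.trans hkj.symm)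
  exact (hle.trans_lt hfree).false

lemma Hset_compl_nonempty [Nonempty (Fin n)] (hlo : ∀ j, 0 ≤ rlo j) (hlt : ∀ j, rlo j < rhi j)
    (x : Schedule m n) : (Hset p rlo rhi x)ᶜ.Nonempty := by
  obtain ⟨i, hi⟩ := x.exists_mem (Classical.arbitrary (Fin n))
  obtain ⟨j, L, hjL⟩ := List.exists_cons_of_ne_nil (List.ne_nil_of_mem hi)
  refine ⟨j, notMem_Hset_of_getElem? (i := i) (k := 0) ?_ ?_⟩
  · simp [hjL]
  · simpa [mComp_nil] using (hlo j).trans_lt (hlt j)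

lemma mComp_le_Cmax (x : Schedule m n) (r : Fin n → ℝ) (i : Fin m) :
    mComp (p i) r (x.seq i) ≤ Cmax p x r :=
  le_ciSup (f := fun i => mComp (p i) r (x.seq i)) (Set.finite_range _).bddAbove i

lemma le_Cmax (hp : ∀ i j, 0 ≤ p i j) (x : Schedule m n) (r : Fin n → ℝ) (t : Fin n) :
    r t + ⨅ i, p i t ≤ Cmax p x r := by
  obtain ⟨i, hi⟩ := x.exists_mem t
  obtain ⟨A, B, hAB⟩ := List.append_of_mem hi
  have hB : 0 ≤ (B.map (p i)).sum := List.sum_nonneg (by simp [hp])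
  have hmin : ⨅ i', p i' t ≤ p i t := ciInf_le (Set.finite_range _).bddBelow i
  have := add_sum_le_mComp_append_cons (p i) r A B t
  rw [← hAB] at this
  linarith [mComp_le_Cmax (p := p) x r i]

lemma le_Cstar [Nonempty (Schedule m n)] (hp : ∀ i j, 0 ≤ p i j) (r : Fin n → ℝ) (t : Fin n) :
    r t + ⨅ i, p i t ≤ Cstar p r :=
  le_ciInf fun y => le_Cmax hp y r t

lemma extSc_self (rlo rhi : Fin n → ℝ) (j : Fin n) : extSc rlo rhi j j = rhi j :=
  Function.update_self ..

noncomputable def extRegretBound (p : Fin m → Fin n → ℝ) (rlo rhi : Fin n → ℝ)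
    (x : Schedule m n) (j : Fin n) : ℝ :=
  Cmax p x (extSc rlo rhi j) - (rhi j + ⨅ i, p i j)

lemma extRegretBound_nonneg (hp : ∀ i j, 0 ≤ p i j) (x : Schedule m n) (j : Fin n) :
    0 ≤ extRegretBound p rlo rhi x j := by
  have := le_Cmax hp x (extSc rlo rhi j) j
  rw [extSc_self] at this
  rw [extRegretBound]
  linarith

lemma exists_notMem_Hset_mComp_sub_Cstar_le (hp : ∀ i j, 0 ≤ p i j) (hlo : ∀ j, 0 ≤ rlo j)
    (hlt : ∀ j, rlo j < rhi j) {r : Fin n → ℝ} (hr : r ∈ box rlo rhi) {i : Fin m}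
    (hi : x.seq i ≠ []) :
    ∃ j ∉ Hset p rlo rhi x,
      mComp (p i) r (x.seq i) - Cstar p r ≤ extRegretBound p rlo rhi x j := by
  have : Nonempty (Schedule m n) := ⟨x⟩
  obtain ⟨A, j, B, hsplit, hfree, hbusy⟩ := exists_critical_job (q := p i) hlo hlt hr hi
  refine ⟨j, notMem_Hset_of_getElem? (i := i) (k := A.length) (by simp [hsplit])
    (by simpa [hsplit]), ?_⟩
  have hext : rhi j + p i j + (B.map (p i)).sum ≤ Cmax p x (extSc rlo rhi j) := by
    have := add_sum_le_mComp_append_cons (p i) (extSc rlo rhi j) A B j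
    rw [extSc_self, ← hsplit] at this
    exact this.trans (mComp_le_Cmax x _ i)
  have hCstar := le_Cstar hp r j
  rw [extRegretBound]
  linarith

end Bound

theorem worst_case_regret_upper_bound_general {m n : ℕ} (hn : 1 ≤ n)
    (p : Fin m → Fin n → ℝ) (hp : ∀ i j, 0 < p i j)
    (rlo rhi : Fin n → ℝ) (hlo : ∀ j, 0 ≤ rlo j) (hlt : ∀ j, rlo j < rhi j)
    (x : Schedule m n) :
    ((Hset p rlo rhi x)ᶜ).Nonempty ∧
      Zreg p x rlo rhi ≤
        ⨆ j : ((Hset p rlo rhi x)ᶜ : Set (Fin n)),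
          (Cmax p x (extSc rlo rhi (j : Fin n)) -
            (rhi (j : Fin n) + ⨅ i : Fin m, p i (j : Fin n))) := by
  have hp₀ : ∀ i j, 0 ≤ p i j := fun i j => (hp i j).le
  have : Nonempty (Fin n) := ⟨⟨0, hn⟩⟩
  have : Nonempty (Schedule m n) := ⟨x⟩
  obtain ⟨j₀, hj₀⟩ := Hset_compl_nonempty (p := p) hlo hlt x
  refine ⟨⟨j₀, hj₀⟩, ?_⟩
  change Zreg p x rlo rhi ≤ ⨆ j : ↥(Hset p rlo rhi x)ᶜ, extRegretBound p rlo rhi x j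
  set S := ⨆ j : ↥(Hset p rlo rhi x)ᶜ, extRegretBound p rlo rhi x j
  have hle_S : ∀ j ∉ Hset p rlo rhi x, extRegretBound p rlo rhi x j ≤ S :=
    fun j hj => le_ciSup (f := fun j : ↥(Hset p rlo rhi x)ᶜ => extRegretBound p rlo rhi x j)
      (Set.finite_range _).bddAbove ⟨j, hj⟩
  have hS : 0 ≤ S := (extRegretBound_nonneg hp₀ x j₀).trans (hle_S j₀ hj₀)
  refine Real.sSup_le ?_ hS
  rintro _ ⟨r, hr, rfl⟩
  have hCstar : 0 ≤ Cstar p r :=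
    (add_nonneg ((hlo j₀).trans (hr j₀).1) (Real.iInf_nonneg (hp₀ · j₀))).trans (le_Cstar hp₀ r j₀)
  show Cmax p x r - Cstar p r ≤ _
  rw [sub_le_iff_le_add']
  refine Real.iSup_le (fun i => ?_) (add_nonneg hCstar hS)
  rcases eq_or_ne (x.seq i) [] with hi | hi
  · rw [hi, mComp_nil]
    exact add_nonneg hCstar hS
  · obtain ⟨j, hj, hle⟩ := exists_notMem_Hset_mComp_sub_Cstar_le hp₀ hlo hlt hr hi
    linarith [hle_S j hj]

/-- Upper bound (12): the worst-case regret is bounded above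
by `max_{j ∉ H(x)} ( C_max(x, r̄^j) − (r⁺ j + min_i p i j) )`, the maximum
being taken over the nonempty set of jobs not in `H(x)`. -/
theorem worst_case_regret_upper_bound {m n : ℕ} (hm : 0 < m) (hn : 1 ≤ n)
    (p : Fin m → Fin n → ℝ) (hp : ∀ i j, 0 < p i j)
    (rlo rhi : Fin n → ℝ) (hlo : ∀ j, 0 ≤ rlo j) (hlt : ∀ j, rlo j < rhi j)
    (x : Schedule m n) :
    ((Hset p rlo rhi x)ᶜ).Nonempty ∧
      Zreg p x rlo rhi ≤
        ⨆ j : ((Hset p rlo rhi x)ᶜ : Set (Fin n)),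
          (Cmax p x (extSc rlo rhi (j : Fin n)) -
            (rhi (j : Fin n) + ⨅ i : Fin m, p i (j : Fin n))) :=
  worst_case_regret_upper_bound_general hn p hp rlo rhi hlo hlt x
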